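/- For any element $z$ of a Coxeter group, the map $\Phi_z : x \mapsto zx^{-1}$ is a bijection from the lower left-weak-order interval $[e,z]_L$ to the lower right-weak-order interval $[e,z]_R$, and it is an anti-isomorphism with respect to the Bruhat order: for $x,x' \le_L z$, $x \le x'$ iff $\Phi_z(x) \ge \Phi_z(x')$. -/

import Mathlib

/-!
`Φ_z` is a bijection with inverse `y ↦ y⁻¹ z`: both weak-order conditions say
`ℓ(z x⁻¹) + ℓ(x) = ℓ(z)`. Up to inversion, the order statement says that the complement map
`u ↦ u⁻¹ v` reverses the Bruhat order on `[e, v]_R`. This is proved by induction on `ℓ(v)`: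
a left descent `s` of the larger element `u'` is a descent of `v`, and the lifting property gives
either `s u ≤ s u'` (then induct inside `[e, s v]_R`) or `u ≤ s u'` with `u ≤_R s v`
(then induct and use the cover `u⁻¹ s v ⋖ u⁻¹ v`).

The lifting property follows from the monotonicity of the Demazure operator `φ_s`, and both rest
on the strong exchange property, which comes from Tits' sign representation of `W` on
`W × {±1}`: the sign that a reflection `t` picks up under `v` is `-1` exactly when `t` is a right
inversion of `v`.
-/

namespace PaperStmt

open scoped Classical

variable {B : Type*} {W : Type*} [Group W] {M : CoxeterMatrix B}

/-- Bruhat (strong) cover: `v = t * u` for a reflection `t`, with `ℓ v = ℓ u + 1`. -/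
def BruhatCov (cs : CoxeterSystem M W) (u v : W) : Prop :=
  cs.length v = cs.length u + 1 ∧ ∃ t : W, cs.IsReflection t ∧ v = t * u

/-- The Bruhat (strong) order, generated by the covering relations. -/
def BruhatLe (cs : CoxeterSystem M W) : W → W → Prop :=
  Relation.ReflTransGen (BruhatCov cs)

/-- Strict Bruhat order. -/
def BruhatLt (cs : CoxeterSystem M W) (u v : W) : Prop :=
  BruhatLe cs u v ∧ u ≠ v

/-- Left weak order: `u ≤_L v` iff `ℓ(v u⁻¹) + ℓ u = ℓ v`. -/
def leftLe (cs : CoxeterSystem M W) (u v : W) : Prop :=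
  cs.length (v * u⁻¹) + cs.length u = cs.length v

/-- Right weak order: `u ≤_R v` iff `ℓ u + ℓ(u⁻¹ v) = ℓ v`. -/
def rightLe (cs : CoxeterSystem M W) (u v : W) : Prop :=
  cs.length u + cs.length (u⁻¹ * v) = cs.length v

/-- Demazure action of a simple reflection: `φ_s(x) = s x` if `s x > x`, else `x`. -/
noncomputable def phi (cs : CoxeterSystem M W) (i : B) (x : W) : W :=
  if BruhatLt cs x (cs.simple i * x) then cs.simple i * x else x

/-- Anti-Demazure action: `ψ_s(x) = s x` if `s x < x`, else `x`. -/
noncomputable def psi (cs : CoxeterSystem M W) (i : B) (x : W) : W :=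
  if BruhatLt cs (cs.simple i * x) x then cs.simple i * x else x

/-- Right anti-Demazure action: `ψ^R_s(x) = x s` if `x s < x`, else `x`. -/
noncomputable def psiR (cs : CoxeterSystem M W) (i : B) (x : W) : W :=
  if BruhatLt cs (x * cs.simple i) x then x * cs.simple i else x

/-- `φ_w` along a word `w = s_1 ⋯ s_n`: `φ_{s_1} ∘ ⋯ ∘ φ_{s_n}`. -/
noncomputable def phiWord (cs : CoxeterSystem M W) (ω : List B) (x : W) : W :=
  ω.foldr (phi cs) x

/-- `ψ_w` along a word `w = s_1 ⋯ s_n`: `ψ_{s_1} ∘ ⋯ ∘ ψ_{s_n}`. -/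
noncomputable def psiWord (cs : CoxeterSystem M W) (ω : List B) (x : W) : W :=
  ω.foldr (psi cs) x

/-- `ψ^R_w` along a word `w = s_1 ⋯ s_n`: `ψ^R_{s_n} ∘ ⋯ ∘ ψ^R_{s_1}`. -/
noncomputable def psiRWord (cs : CoxeterSystem M W) (ω : List B) (x : W) : W :=
  ω.foldl (fun y i => psiR cs i y) x

section

variable (cs : CoxeterSystem M W)

local prefix:100 "s" => cs.simple
local prefix:100 "ℓ" => cs.length

noncomputable def eqSign (a b : W) : ℤˣ := if a = b then -1 else 1

theorem eqSign_conj (g a b : W) : eqSign (g⁻¹ * a * g) b = eqSign a (g * b * g⁻¹) := by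
  simp only [eqSign]
  congr 1
  exact propext ⟨fun h => by rw [← h]; group, fun h => by rw [h]; group⟩

theorem eqSign_conj_simple (i : B) (a b : W) :
    eqSign (s i * a * s i) b = eqSign a (s i * b * s i) := by
  simpa [cs.inv_simple] using eqSign_conj (s i) a b

noncomputable def signedConj (i : B) : Equiv.Perm (W × ℤˣ) :=
  Function.Involutive.toPerm (fun x => (s i * x.1 * s i, x.2 * eqSign x.1 (s i))) <| by
    rintro ⟨w, ε⟩
    change (s i * (s i * w * s i) * s i, ε * eqSign w (s i) * eqSign (s i * w * s i) (s i)) = _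
    rw [eqSign_conj_simple]
    simp [mul_assoc, cs.simple_mul_simple_cancel_left, Int.units_mul_self]

theorem signedConj_apply (i : B) (w : W) (ε : ℤˣ) :
    signedConj cs i (w, ε) = (s i * w * s i, ε * eqSign w (s i)) :=
  rfl

theorem signedConj_mul_pow_apply (i j : B) (k : ℕ) (w : W) (ε : ℤˣ) :
    ((signedConj cs i * signedConj cs j) ^ k) (w, ε) =
      ((s j * s i)⁻¹ ^ k * w * (s j * s i) ^ k,
        ε * ∏ q ∈ Finset.range (2 * k), eqSign w ((s j * s i) ^ q * s j)) := by
  have hstep (w : W) (ε : ℤˣ) : (signedConj cs i * signedConj cs j) (w, ε) =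
      ((s j * s i)⁻¹ * w * (s j * s i),
        ε * (eqSign w ((s j * s i) ^ 0 * s j) * eqSign w ((s j * s i) ^ 1 * s j))) := by
    simp only [Equiv.Perm.mul_apply, signedConj_apply, Prod.mk.injEq, eqSign_conj_simple]
    refine ⟨by simp only [mul_inv_rev, cs.inv_simple]; group, ?_⟩
    simp [mul_assoc]
  set r := s j * s i with hr
  clear_value r
  have hsr : s j * r⁻¹ = r * s j := by simp [hr, cs.inv_simple, mul_assoc]
  have hshift (q : ℕ) (w : W) :
      eqSign (r⁻¹ * w * r) (r ^ q * s j) = eqSign w (r ^ (q + 2) * s j) := by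
    rw [eqSign_conj, mul_assoc, mul_assoc (r ^ q), hsr, pow_add, pow_two]
    group
  induction k generalizing w ε with
  | zero => simp
  | succ k ih =>
    rw [pow_succ, Equiv.Perm.mul_apply, hstep, ih, Prod.mk.injEq]
    refine ⟨by group, ?_⟩
    simp only [hshift, Nat.mul_succ, Finset.prod_range_succ' _ (2 * k + 1),
      Finset.prod_range_succ' _ (2 * k), zero_add, add_assoc, Nat.reduceAdd]
    ac_rfl

theorem isLiftable_signedConj : M.IsLiftable (signedConj cs) := by
  intro i j
  have hr : (s j * s i) ^ M i j = 1 := cs.simple_mul_simple_pow' i j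
  ext1 ⟨w, ε⟩
  -- `(s j * s i) ^ q * s j` has period `M i j` in `q`, so every sign occurs twice.
  have hperiod : ∏ q ∈ Finset.range (2 * M i j), eqSign w ((s j * s i) ^ q * s j) = 1 := by
    rw [two_mul, Finset.prod_range_add]
    simp only [pow_add, hr, one_mul, Int.units_mul_self]
  rw [signedConj_mul_pow_apply, hperiod, inv_pow, hr]
  simp

/-- Tits' sign representation. -/
noncomputable def signRep : W →* Equiv.Perm (W × ℤˣ) :=
  cs.lift ⟨signedConj cs, isLiftable_signedConj cs⟩

theorem signRep_simple (i : B) : signRep cs (s i) = signedConj cs i :=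
  cs.lift_apply_simple (isLiftable_signedConj cs) i

noncomputable def reflCocycle (v w : W) : ℤˣ := (signRep cs v (w, 1)).2

theorem signRep_apply (v w : W) (ε : ℤˣ) :
    signRep cs v (w, ε) = (v * w * v⁻¹, ε * reflCocycle cs v w) := by
  induction v using cs.simple_induction_left generalizing w ε with
  | one => simp [reflCocycle]
  | mul_simple_left v i ih =>
    have key (ε : ℤˣ) : signRep cs (s i * v) (w, ε) =
        (s i * (v * w * v⁻¹) * s i,
          ε * reflCocycle cs v w * eqSign (v * w * v⁻¹) (s i)) := by
      rw [map_mul, Equiv.Perm.mul_apply, ih, signRep_simple, signedConj_apply]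
    have hcoc :
        reflCocycle cs (s i * v) w = reflCocycle cs v w * eqSign (v * w * v⁻¹) (s i) := by
      change (signRep cs (s i * v) (w, 1)).2 = _
      rw [key, one_mul]
    rw [key, hcoc, Prod.mk.injEq]
    exact ⟨by simp [cs.inv_simple, mul_assoc], by rw [mul_assoc]⟩

theorem reflCocycle_mul (a b w : W) :
    reflCocycle cs (a * b) w = reflCocycle cs b w * reflCocycle cs a (b * w * b⁻¹) := by
  have h : signRep cs (a * b) (w, 1) = signRep cs a (signRep cs b (w, 1)) := by
    rw [map_mul, Equiv.Perm.mul_apply]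
  rw [signRep_apply, signRep_apply, signRep_apply] at h
  simpa using congrArg Prod.snd h

theorem reflCocycle_simple (i : B) (w : W) : reflCocycle cs (s i) w = eqSign w (s i) := by
  simp [reflCocycle, signRep_simple, signedConj_apply]

theorem reflCocycle_conj_self (g a : W) :
    reflCocycle cs (g * a * g⁻¹) (g * a * g⁻¹) = reflCocycle cs a a := by
  have hone : reflCocycle cs 1 a = 1 := by simp [reflCocycle]
  have h₁ := reflCocycle_mul cs (g * a) g⁻¹ (g * a * g⁻¹)
  have h₂ := reflCocycle_mul cs g a a
  have h₃ := reflCocycle_mul cs g⁻¹ g a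
  simp only [mul_assoc, inv_inv, inv_mul_cancel, mul_inv_cancel, mul_one, inv_mul_cancel_left,
    hone] at h₁ h₂ h₃ ⊢
  rw [h₁, h₂, mul_left_comm, mul_comm (reflCocycle cs g⁻¹ _), ← h₃, mul_one]

theorem reflCocycle_self {t : W} (ht : cs.IsReflection t) : reflCocycle cs t t = -1 := by
  obtain ⟨g, i, rfl⟩ := ht
  rw [reflCocycle_conj_self, reflCocycle_simple, eqSign, if_pos rfl]

theorem reflCocycle_wordProd (ω : List B) (w : W) :
    reflCocycle cs (cs.wordProd ω) w = ((cs.rightInvSeq ω).map (eqSign w)).prod := by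
  induction ω with
  | nil => simp [reflCocycle]
  | cons i ω ih =>
    have hconj := eqSign_conj (cs.wordProd ω)⁻¹ w (s i)
    rw [inv_inv] at hconj
    rw [cs.wordProd_cons, reflCocycle_mul, reflCocycle_simple, ih, hconj,
      CoxeterSystem.rightInvSeq, List.map_cons, List.prod_cons, mul_comm]

theorem mem_rightInvSeq_of_reflCocycle_eq_neg_one {ω : List B} {t : W}
    (h : reflCocycle cs (cs.wordProd ω) t = -1) : t ∈ cs.rightInvSeq ω := by
  by_contra hmem
  rw [reflCocycle_wordProd, List.prod_eq_one] at h
  · exact absurd h (by decide)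
  · simp only [List.mem_map]
    rintro _ ⟨x, hx, rfl⟩
    exact if_neg fun hx' : t = x => hmem (hx' ▸ hx)

theorem reflCocycle_eq_neg_one_iff {v t : W} (ht : cs.IsReflection t) :
    reflCocycle cs v t = -1 ↔ ℓ (v * t) < ℓ v := by
  have hinv {v : W} (h : reflCocycle cs v t = -1) : ℓ (v * t) < ℓ v := by
    obtain ⟨ω, hω, rfl⟩ := cs.exists_isReduced v
    exact (cs.isRightInversion_of_mem_rightInvSeq hω
      (mem_rightInvSeq_of_reflCocycle_eq_neg_one cs h)).2
  refine ⟨hinv, fun hlt => ?_⟩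
  -- Otherwise the cocycle at `v * t` would be `-1`, making `t` a right inversion of `v * t` too.
  rcases Int.units_eq_one_or (reflCocycle cs v t) with h | h
  · have hvt : reflCocycle cs (v * t) t = -1 := by
      rw [reflCocycle_mul, reflCocycle_self cs ht, ht.inv, ht.mul_self, one_mul, h, mul_one]
    have := hinv hvt
    rw [mul_assoc, ht.mul_self, mul_one] at this
    omega
  · exact h

/-- The strong exchange property. -/
theorem exists_eraseIdx_of_length_mul_lt {ω : List B} {t : W} (ht : cs.IsReflection t)
    (h : ℓ (t * cs.wordProd ω) < ℓ (cs.wordProd ω)) :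
    ∃ j < ω.length, t * cs.wordProd ω = cs.wordProd (ω.eraseIdx j) := by
  have hrev : ℓ (cs.wordProd ω.reverse * t) < ℓ (cs.wordProd ω.reverse) := by
    rwa [cs.wordProd_reverse, ← cs.length_inv, mul_inv_rev, inv_inv, ht.inv, cs.length_inv]
  have hmem := mem_rightInvSeq_of_reflCocycle_eq_neg_one cs
    ((reflCocycle_eq_neg_one_iff cs ht).2 hrev)
  rw [cs.rightInvSeq_reverse, List.mem_reverse] at hmem
  obtain ⟨j, hj, rfl⟩ := List.mem_iff_getElem.mp hmem
  refine ⟨j, by simpa using hj, ?_⟩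
  rw [← List.getD_eq_getElem _ 1 hj, cs.getD_leftInvSeq_mul_wordProd]

theorem exchange_of_length_mul_eq {t a b : W} (ht : cs.IsReflection t)
    (hab : ℓ (a * b) = ℓ a + ℓ b) (h : ℓ (t * (a * b)) < ℓ (a * b)) :
    ℓ (t * a) < ℓ a ∨ ℓ (a⁻¹ * (t * (a * b))) < ℓ b := by
  obtain ⟨α, hα, rfl⟩ := cs.exists_isReduced a
  obtain ⟨β, hβ, rfl⟩ := cs.exists_isReduced b
  rw [← cs.wordProd_append] at hab h ⊢
  obtain ⟨j, hj, hje⟩ := exists_eraseIdx_of_length_mul_lt cs ht h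
  rw [List.length_append] at hj
  rcases lt_or_ge j α.length with hjα | hjα
  · left
    rw [List.eraseIdx_append_of_lt_length hjα, cs.wordProd_append, cs.wordProd_append,
      ← mul_assoc, mul_left_inj] at hje
    have := List.length_eraseIdx_add_one hjα
    rw [hje, hα.eq]
    linarith [cs.length_wordProd_le (α.eraseIdx j)]
  · right
    rw [hje, List.eraseIdx_append_of_length_le hjα, cs.wordProd_append, inv_mul_cancel_left,
      hβ.eq]
    have := List.length_eraseIdx_add_one (show j - α.length < β.length by omega)
    linarith [cs.length_wordProd_le (β.eraseIdx (j - α.length))]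

theorem eq_simple_of_cover {t w : W} (i : B) (ht : cs.IsReflection t)
    (hcov : ℓ w = ℓ (t * w) + 1) (hw : ℓ (s i * w) < ℓ w)
    (htw : ℓ (t * w) < ℓ (s i * (t * w))) : t = s i := by
  have hsw : s i * (s i * w) = w := cs.simple_mul_simple_cancel_left i
  have hsw_len : ℓ (s i * w) + 1 = ℓ w := by
    rcases cs.length_simple_mul w i with h | h <;> omega
  have hlen : ℓ (s i * (s i * w)) = ℓ (s i) + ℓ (s i * w) := by
    rw [hsw, cs.length_simple]
    omega
  have hlt : ℓ (t * (s i * (s i * w))) < ℓ (s i * (s i * w)) := by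
    rw [hsw]
    omega
  rcases exchange_of_length_mul_eq cs ht hlen hlt with h | h
  · rwa [cs.length_simple, Nat.lt_one_iff, cs.length_eq_zero_iff, mul_eq_one_iff_eq_inv,
      cs.inv_simple] at h
  · rw [cs.inv_simple, hsw] at h
    omega

theorem length_le_of_bruhatLe {u v : W} (h : BruhatLe cs u v) : ℓ u ≤ ℓ v := by
  induction h with
  | refl => exact le_rfl
  | tail _ hcov ih => exact ih.trans (hcov.1 ▸ Nat.le_succ _)

theorem bruhatCov_inv {u v : W} (h : BruhatCov cs u v) : BruhatCov cs u⁻¹ v⁻¹ := by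
  obtain ⟨hlen, t, ht, rfl⟩ := h
  refine ⟨by rwa [cs.length_inv, cs.length_inv], u⁻¹ * t * u⁻¹⁻¹, ht.conj u⁻¹, ?_⟩
  rw [mul_inv_rev, ht.inv]
  group

theorem bruhatLe_inv {u v : W} (h : BruhatLe cs u v) : BruhatLe cs u⁻¹ v⁻¹ := by
  induction h with
  | refl => exact .refl
  | tail _ hcov ih => exact ih.tail (bruhatCov_inv cs hcov)

theorem bruhatLe_mul_of_length_eq {t u : W} (ht : cs.IsReflection t) (h : ℓ (t * u) = ℓ u + 1) :
    BruhatLe cs u (t * u) :=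
  .single ⟨h, t, ht, rfl⟩

theorem bruhatLt_simple_mul_iff (i : B) (x : W) :
    BruhatLt cs x (s i * x) ↔ ℓ x < ℓ (s i * x) := by
  constructor
  · rintro ⟨hle, -⟩
    exact (length_le_of_bruhatLe cs hle).lt_of_ne (cs.length_simple_mul_ne x i).symm
  · intro h
    refine ⟨bruhatLe_mul_of_length_eq cs (cs.isReflection_simple i) ?_, fun he => ?_⟩
    · rcases cs.length_simple_mul x i with h' | h' <;> omega
    · rw [← he] at h
      exact h.false

theorem simple_mul_bruhatLt_iff (i : B) (x : W) :
    BruhatLt cs (s i * x) x ↔ ℓ (s i * x) < ℓ x := by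
  simpa only [cs.simple_mul_simple_cancel_left] using bruhatLt_simple_mul_iff cs i (s i * x)

theorem phi_eq_ite (i : B) (x : W) :
    phi cs i x = if ℓ x < ℓ (s i * x) then s i * x else x := by
  simp only [phi, bruhatLt_simple_mul_iff]

theorem psi_eq_ite (i : B) (x : W) :
    psi cs i x = if ℓ (s i * x) < ℓ x then s i * x else x := by
  simp only [psi, simple_mul_bruhatLt_iff]

theorem psi_bruhatLe (i : B) (x : W) : BruhatLe cs (psi cs i x) x := by
  unfold psi
  split_ifs with h
  exacts [h.1, .refl]

theorem phi_simple_mul {i : B} {x : W} (h : ℓ (s i * x) < ℓ x) : phi cs i (s i * x) = x := by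
  rw [phi_eq_ite, cs.simple_mul_simple_cancel_left, if_pos h]

theorem phi_le_phi_of_cov (i : B) {a b : W} (h : BruhatCov cs a b) :
    BruhatLe cs (phi cs i a) (phi cs i b) := by
  obtain ⟨hlen, t, ht, rfl⟩ := h
  have hcov : BruhatLe cs a (t * a) := bruhatLe_mul_of_length_eq cs ht hlen
  rw [phi_eq_ite, phi_eq_ite]
  have htta : t * (t * a) = a := by rw [← mul_assoc, ht.mul_self, one_mul]
  split_ifs with ha hta hta
  · have hconj : s i * (t * a) = (s i * t * (s i)⁻¹) * (s i * a) := by group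
    rw [hconj]
    refine bruhatLe_mul_of_length_eq cs (ht.conj (s i)) ?_
    rw [← hconj]
    rcases cs.length_simple_mul a i with h | h <;>
      rcases cs.length_simple_mul (t * a) i with h' | h' <;> omega
  · rw [eq_simple_of_cover cs i ht (by rw [htta]; omega)
      ((not_lt.1 hta).lt_of_ne (cs.length_simple_mul_ne _ i)) (by rwa [htta])]
    exact .refl
  · exact hcov.trans (bruhatLe_mul_of_length_eq cs (cs.isReflection_simple i) (by
      rcases cs.length_simple_mul (t * a) i with h' | h' <;> omega))
  · exact hcov

theorem phi_mono (i : B) {a b : W} (h : BruhatLe cs a b) :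
    BruhatLe cs (phi cs i a) (phi cs i b) := by
  induction h with
  | refl => exact .refl
  | tail _ hcov ih => exact ih.trans (phi_le_phi_of_cov cs i hcov)

theorem bruhatLe_mul_of_length_lt {t u : W} (ht : cs.IsReflection t) (h : ℓ u < ℓ (t * u)) :
    BruhatLe cs u (t * u) := by
  induction hn : ℓ (t * u) using Nat.strong_induction_on generalizing t u with
  | _ n ih =>
  subst hn
  by_cases hcov : ℓ (t * u) = ℓ u + 1
  · exact bruhatLe_mul_of_length_eq cs ht hcov
  obtain ⟨i, hi⟩ := cs.exists_leftDescent_of_ne_one (w := t * u) fun h1 => by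
    rw [h1, cs.length_one] at h
    omega
  rw [cs.isLeftDescent_iff] at hi
  have hconj : s i * (t * u) = (s i * t * (s i)⁻¹) * (s i * u) := by group
  have ht' := ht.conj (s i)
  have hsv : BruhatLe cs (s i * (t * u)) (t * u) := by
    simpa only [cs.simple_mul_simple_cancel_left] using
      bruhatLe_mul_of_length_eq cs (cs.isReflection_simple i)
        (show ℓ (s i * (s i * (t * u))) = ℓ (s i * (t * u)) + 1 by
          rw [cs.simple_mul_simple_cancel_left]; omega)
  rcases cs.length_simple_mul u i with hu | hu
  · have hne := ht'.length_mul_right_ne (s i * u)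
    rw [← hconj] at hne
    have hle := ih (ℓ (s i * (t * u))) (by omega) ht' (by rw [← hconj]; omega) (by rw [hconj])
    rw [← hconj] at hle
    exact (bruhatLe_mul_of_length_eq cs (cs.isReflection_simple i) hu).trans (hle.trans hsv)
  · have hle := ih (ℓ (s i * (t * u))) (by omega) ht' (by rw [← hconj]; omega) (by rw [hconj])
    rw [← hconj] at hle
    simpa only [phi_simple_mul cs (show ℓ (s i * u) < ℓ u by omega),
      phi_simple_mul cs (show ℓ (s i * (t * u)) < ℓ (t * u) by omega)] using phi_mono cs i hle

/-- The lifting property of the Bruhat order. -/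
theorem psi_le_simple_mul {i : B} {u w : W} (h : BruhatLe cs u w) (hw : ℓ (s i * w) < ℓ w) :
    BruhatLe cs (psi cs i u) (s i * w) := by
  induction h with
  | refl => rw [psi_eq_ite, if_pos hw]; exact .refl
  | @tail b c hub hcov ih =>
    obtain ⟨hlen, r, hr, rfl⟩ := hcov
    have hrrb : r * (r * b) = b := by rw [← mul_assoc, hr.mul_self, one_mul]
    rcases cs.length_simple_mul b i with hb | hb
    · rw [eq_simple_of_cover cs i hr (by rw [hrrb]; omega) hw (by rw [hrrb]; omega),
        cs.simple_mul_simple_cancel_left]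
      exact (psi_bruhatLe cs i u).trans hub
    · have hconj : s i * (r * b) = (s i * r * (s i)⁻¹) * (s i * b) := by group
      have hle := bruhatLe_mul_of_length_lt cs (hr.conj (s i)) (u := s i * b)
        (by rw [← hconj]; rcases cs.length_simple_mul (r * b) i with h' | h' <;> omega)
      rw [← hconj] at hle
      exact (ih (by omega)).trans hle

theorem length_simple_mul_lt_of_rightLe {i : B} {u v : W} (huv : rightLe cs u v)
    (hu : ℓ (s i * u) < ℓ u) : ℓ (s i * v) < ℓ v := by
  have := cs.length_mul_le (s i * u) (u⁻¹ * v)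
  rw [mul_assoc, mul_inv_cancel_left] at this
  unfold rightLe at huv
  omega

theorem rightLe_simple_mul_of_descent {i : B} {u v : W} (huv : rightLe cs u v)
    (hu : ℓ (s i * u) < ℓ u) : rightLe cs (s i * u) (s i * v) := by
  have hv := length_simple_mul_lt_of_rightLe cs huv hu
  have := cs.length_mul_le (s i * u) (u⁻¹ * v)
  rw [mul_assoc, mul_inv_cancel_left] at this
  unfold rightLe at huv ⊢
  rw [mul_inv_rev, mul_assoc, inv_mul_cancel_left]
  rcases cs.length_simple_mul u i with h | h <;>
    rcases cs.length_simple_mul v i with h' | h' <;> omega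

theorem rightLe_simple_mul_of_ascent {i : B} {u v : W} (huv : rightLe cs u v)
    (hv : ℓ (s i * v) < ℓ v) (hu : ℓ u < ℓ (s i * u)) : rightLe cs u (s i * v) := by
  have hv' : ℓ (u * (u⁻¹ * v)) = ℓ u + ℓ (u⁻¹ * v) := by
    rw [mul_inv_cancel_left]
    exact huv.symm
  rcases exchange_of_length_mul_eq cs (cs.isReflection_simple i) hv'
    (by rwa [mul_inv_cancel_left]) with h | h
  · omega
  · rw [mul_inv_cancel_left] at h
    have := cs.length_mul_le u (u⁻¹ * (s i * v))
    rw [mul_inv_cancel_left] at this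
    unfold rightLe at huv ⊢
    rcases cs.length_simple_mul v i with h' | h' <;> omega

theorem inv_mul_simple_mul_bruhatLe {i : B} {u v : W} (hu : rightLe cs u v)
    (hsv : rightLe cs u (s i * v)) (hv : ℓ (s i * v) < ℓ v) :
    BruhatLe cs (u⁻¹ * (s i * v)) (u⁻¹ * v) := by
  have hconj : u⁻¹ * v = (u⁻¹ * s i * u⁻¹⁻¹) * (u⁻¹ * (s i * v)) := by
    simp [mul_assoc, cs.simple_mul_simple_cancel_left]
  refine hconj ▸ bruhatLe_mul_of_length_eq cs ((cs.isReflection_simple i).conj u⁻¹) ?_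
  rw [← hconj]
  unfold rightLe at hu hsv
  rcases cs.length_simple_mul v i with h | h <;> omega

theorem bruhatLe_inv_mul_of_rightLe {u u' v : W} (hu : rightLe cs u v) (hu' : rightLe cs u' v)
    (h : BruhatLe cs u u') : BruhatLe cs (u'⁻¹ * v) (u⁻¹ * v) := by
  induction hn : ℓ v using Nat.strong_induction_on generalizing u u' v with
  | _ n ih =>
  subst hn
  by_cases hu'1 : u' = 1
  · subst hu'1
    obtain rfl : u = 1 := by
      have := length_le_of_bruhatLe cs h
      rwa [cs.length_one, Nat.le_zero, cs.length_eq_zero_iff] at this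
    exact .refl
  obtain ⟨i, hi⟩ := cs.exists_leftDescent_of_ne_one hu'1
  have hi' : ℓ (s i * u') < ℓ u' := hi
  have hv := length_simple_mul_lt_of_rightLe cs hu' hi'
  have hsu' := rightLe_simple_mul_of_descent cs hu' hi'
  have hcancel (x : W) : (s i * x)⁻¹ * (s i * v) = x⁻¹ * v := by
    rw [mul_inv_rev, mul_assoc, inv_mul_cancel_left]
  have hlift := psi_le_simple_mul cs h hi'
  rw [psi_eq_ite] at hlift
  split_ifs at hlift with hui
  · have := ih _ hv (rightLe_simple_mul_of_descent cs hu hui) hsu' hlift rfl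
    rwa [hcancel, hcancel] at this
  · have hsv := rightLe_simple_mul_of_ascent cs hu hv
      ((not_lt.1 hui).lt_of_ne (cs.length_simple_mul_ne u i).symm)
    have hle := ih _ hv hsv hsu' hlift rfl
    rw [hcancel] at hle
    exact hle.trans (inv_mul_simple_mul_bruhatLe cs hu hsv hv)

end

theorem stmt10 (cs : CoxeterSystem M W) (z : W) :
    Set.BijOn (fun x => z * x⁻¹) {x | leftLe cs x z} {y | rightLe cs y z} ∧
      ∀ x x', leftLe cs x z → leftLe cs x' z →
        (BruhatLe cs x x' ↔ BruhatLe cs (z * x'⁻¹) (z * x⁻¹)) := by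
  have hright (x : W) : leftLe cs x z ↔ rightLe cs (z * x⁻¹) z := by
    simp [leftLe, rightLe, mul_assoc]
  have hright_inv (x : W) : leftLe cs x z ↔ rightLe cs x⁻¹ z⁻¹ := by
    simp [leftLe, rightLe, cs.length_inv, ← cs.length_inv (z * x⁻¹), add_comm]
  refine ⟨Set.InvOn.bijOn (f' := fun y => y⁻¹ * z) ⟨fun x _ => ?_, fun y _ => ?_⟩
    (fun x hx => (hright x).1 hx) (fun y hy => (hright _).2 ?_), fun x x' hx hx' => ⟨?_, ?_⟩⟩
  · simp
  · simp
  · simpa using hy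
  · intro h
    simpa using bruhatLe_inv cs (bruhatLe_inv_mul_of_rightLe cs ((hright_inv x).1 hx)
      ((hright_inv x').1 hx') (bruhatLe_inv cs h))
  · intro h
    simpa using bruhatLe_inv_mul_of_rightLe cs ((hright x').1 hx') ((hright x).1 hx) h
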